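/- arXiv:2109.09943 — 3 statements merged into one kernel-verified Lean document; each statement's English description precedes it below -/
import Mathlib

section
/- Let A be an n × m real matrix and let r' be a natural number with 1 ≤ r' ≤ min n m. Then rank A < r' if and only if every r' × r' minor of A (i.e., the determinant of every r' × r' submatrix obtained by choosing r' rows and r' columns) is zero. -/
open Matrix Submodule Module

lemma aux_le_rank {n m r' : ℕ} (A : Matrix (Fin n) (Fin m) ℝ) :
    r' ≤ A.rank ↔
      ∃ f : Fin r' → Fin n, Function.Injective f ∧ LinearIndependent ℝ (A ∘ f) := by
  constructor
  · intro hle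
    rw [Matrix.rank_eq_finrank_span_row] at hle
    obtain ⟨b, hbs, hbspan, hbind⟩ := exists_linearIndependent ℝ (Set.range A)
    have hbfin : b.Finite := hbind.setFinite
    haveI : Fintype b := hbfin.fintype
    have hcard : finrank ℝ (span ℝ b) = b.toFinset.card := finrank_span_set_eq_card hbind
    have hle' : r' ≤ Fintype.card b := by
      rw [show A.row = A from rfl, ← hbspan] at hle
      rw [hcard, Set.toFinset_card] at hle
      exact hle
    obtain ⟨e⟩ : Nonempty (Fin r' ↪ b) := by
      rw [Function.Embedding.nonempty_iff_card_le, Fintype.card_fin]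
      exact hle'
    have hchoice : ∀ x : b, ∃ i : Fin n, A i = (x : Fin m → ℝ) := fun x => hbs x.2
    choose c hc using hchoice
    refine ⟨c ∘ e, ?_, ?_⟩
    · intro i j hij
      have : A (c (e i)) = A (c (e j)) := congrArg A hij
      rw [hc, hc] at this
      exact e.injective (Subtype.ext this)
    · have : A ∘ (c ∘ e) = (fun x : b => (x : Fin m → ℝ)) ∘ e := by
        funext i; exact hc (e i)
      rw [this]
      exact hbind.comp e e.injective
  · rintro ⟨f, hf, hind⟩
    rw [Matrix.rank_eq_finrank_span_row]
    have h1 : finrank ℝ (span ℝ (Set.range (A ∘ f))) = r' := by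
      rw [finrank_span_eq_card hind, Fintype.card_fin]
    have h2 : span ℝ (Set.range (A ∘ f)) ≤ span ℝ (Set.range A) :=
      span_mono (Set.range_comp_subset_range f A)
    calc r' = finrank ℝ (span ℝ (Set.range (A ∘ f))) := h1.symm
      _ ≤ finrank ℝ (span ℝ (Set.range A)) := Submodule.finrank_mono h2

lemma aux_le_rank_iff_minor {n m r' : ℕ} (A : Matrix (Fin n) (Fin m) ℝ) :
    r' ≤ A.rank ↔
      ∃ (f : Fin r' → Fin n) (g : Fin r' → Fin m),
        Function.Injective f ∧ Function.Injective g ∧ (A.submatrix f g).det ≠ 0 := by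
  constructor
  · intro hle
    obtain ⟨f, hf, hind⟩ := (aux_le_rank A).mp hle
    -- B : rows A∘f, which are linearly independent, so rank B = r'
    set B : Matrix (Fin r') (Fin m) ℝ := A.submatrix f id with hB
    have hrB : B.rank = r' := by
      rw [Matrix.rank_eq_finrank_span_row]
      have hBe : Set.range B = Set.range (A ∘ f) := rfl
      rw [show B.row = B from rfl, hBe, finrank_span_eq_card hind, Fintype.card_fin]
    have hrBT : r' ≤ Bᵀ.rank := by rw [Matrix.rank_transpose]; exact hrB.ge
    obtain ⟨g, hg, hindg⟩ := (aux_le_rank Bᵀ).mp hrBT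
    refine ⟨f, g, hf, hg, ?_⟩
    have hM : Bᵀ ∘ g = fun j => (A.submatrix f g)ᵀ j := by
      funext j; rfl
    rw [hM] at hindg
    have hunit : IsUnit (A.submatrix f g)ᵀ :=
      (Matrix.linearIndependent_rows_iff_isUnit).mp hindg
    have : IsUnit (A.submatrix f g)ᵀ.det := (Matrix.isUnit_iff_isUnit_det _).mp hunit
    rw [Matrix.det_transpose] at this
    exact this.ne_zero
  · rintro ⟨f, g, hf, hg, hdet⟩
    apply (aux_le_rank A).mpr
    refine ⟨f, hf, ?_⟩
    have hunit : IsUnit (A.submatrix f g) := (Matrix.isUnit_iff_isUnit_det _).mpr hdet.isUnit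
    have hrows : LinearIndependent ℝ (fun i => A.submatrix f g i) :=
      (Matrix.linearIndependent_rows_iff_isUnit).mpr hunit
    have hcomp : (fun i => A.submatrix f g i) =
        (LinearMap.funLeft ℝ ℝ g) ∘ (A ∘ f) := by
      funext i; rfl
    rw [hcomp] at hrows
    exact LinearIndependent.of_comp _ hrows

/-- Determinant characterization of rank: `rank A < r'` iff every `r' × r'` minor vanishes. -/
theorem rank_lt_iff_all_minors_zero {n m r' : ℕ} (A : Matrix (Fin n) (Fin m) ℝ)
    (h1 : 1 ≤ r') (h2 : r' ≤ min n m) :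
    A.rank < r' ↔
      ∀ (f : Fin r' → Fin n) (g : Fin r' → Fin m),
        Function.Injective f → Function.Injective g → (A.submatrix f g).det = 0 := by
  rw [← not_le, aux_le_rank_iff_minor]
  push_neg
  constructor
  · intro h f g hf hg
    exact h f g hf hg
  · intro h f g hf hg
    exact h f g hf hg
end

section
/- The set K̄ = {(k, y) ∈ ℝ³ × ℝ⁴ | k₁·y₁² = 1, k₂ = y₂², k₃ = y₃², k₂·k₃ = 0, (k₂ + k₃)·y₄² = 1} projects via (k,y) ↦ k exactly onto the union K₁ ∪ K₂, where K₁ = {k ∈ ℝ³ | k₁ > 0, k₂ > 0, k₃ = 0} and K₂ = {k ∈ ℝ³ | k₁ > 0, k₂ = 0, k₃ > 0}. -/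
/-- The lifted set projects onto the union `K₁ ∪ K₂` used for model discrimination. -/
theorem lifted_union_projection :
    {k : Fin 3 → ℝ | ∃ y : Fin 4 → ℝ,
        k 0 * (y 0) ^ 2 = 1 ∧ k 1 = (y 1) ^ 2 ∧ k 2 = (y 2) ^ 2 ∧
        k 1 * k 2 = 0 ∧ (k 1 + k 2) * (y 3) ^ 2 = 1} =
      {k : Fin 3 → ℝ | 0 < k 0 ∧ 0 < k 1 ∧ k 2 = 0} ∪
      {k : Fin 3 → ℝ | 0 < k 0 ∧ k 1 = 0 ∧ 0 < k 2} := by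
  ext k
  simp only [Set.mem_setOf_eq, Set.mem_union]
  constructor
  · rintro ⟨y, h0, h1, h2, hprod, hsum⟩
    have hk0 : 0 < k 0 := by
      have hy0 : (y 0) ^ 2 ≠ 0 := by intro h; rw [h, mul_zero] at h0; norm_num at h0
      have hy0' : 0 < (y 0) ^ 2 := lt_of_le_of_ne (sq_nonneg _) (Ne.symm hy0)
      nlinarith
    have hk1 : 0 ≤ k 1 := h1 ▸ sq_nonneg _
    have hk2 : 0 ≤ k 2 := h2 ▸ sq_nonneg _
    have hsum' : 0 < k 1 + k 2 := by nlinarith [sq_nonneg (y 3)]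
    rcases mul_eq_zero.mp hprod with h | h
    · right; refine ⟨hk0, h, ?_⟩; rw [h] at hsum'; linarith
    · left; refine ⟨hk0, ?_, h⟩; rw [h] at hsum'; linarith
  · rintro (⟨hk0, hk1, hk2⟩ | ⟨hk0, hk1, hk2⟩)
    · refine ⟨![Real.sqrt (k 0)⁻¹, Real.sqrt (k 1), 0, Real.sqrt (k 1)⁻¹], ?_, ?_, ?_, ?_, ?_⟩ <;>
        simp [Real.sq_sqrt, (inv_pos.mpr hk0).le, hk1.le, (inv_pos.mpr hk1).le, hk2] <;>
        field_simp <;>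
        rw [Real.sq_sqrt hk0.le]
    · refine ⟨![Real.sqrt (k 0)⁻¹, 0, Real.sqrt (k 2), Real.sqrt (k 2)⁻¹], ?_, ?_, ?_, ?_, ?_⟩ <;>
        simp [Real.sq_sqrt, (inv_pos.mpr hk0).le, hk2.le, (inv_pos.mpr hk2).le, hk1] <;>
        field_simp <;>
        rw [Real.sq_sqrt hk0.le]
end

section
/- Every finite real Gaussian mixture has a unique minimal representation: if Σᵢ₌₁ⁿ wᵢ·φ(x; μᵢ, σᵢ²) = Σⱼ₌₁ᵐ vⱼ·φ(x; νⱼ, τⱼ²) for all x ∈ ℝ, where the pairs (μᵢ, σᵢ²) are pairwise distinct with wᵢ > 0, and the pairs (νⱼ, τⱼ²) are pairwise distinct with vⱼ > 0, then n = m and there is a bijection π with (μᵢ, σᵢ², wᵢ) = (ν_{π(i)}, τ_{π(i)}², v_{π(i)}) for all i. -/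
/-- One-dimensional Gaussian density with mean `μ` and variance `s`. -/
noncomputable def gaussPDF (x μ s : ℝ) : ℝ :=
  Real.exp (-(x - μ) ^ 2 / (2 * s)) / Real.sqrt (2 * Real.pi * s)

open Filter Finset

lemma gaussPDF_pos (x μ s : ℝ) (hs : 0 < s) : 0 < gaussPDF x μ s := by
  unfold gaussPDF
  have h2 : (0:ℝ) < 2 * Real.pi * s := by positivity
  exact div_pos (Real.exp_pos _) (Real.sqrt_pos.2 h2)

lemma gauss_ratio_tendsto (μ1 s1 μ2 s2 : ℝ) (hs1 : 0 < s1) (hs2 : 0 < s2)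
    (hlt : s1 < s2 ∨ (s1 = s2 ∧ μ1 < μ2)) :
    Tendsto (fun x => gaussPDF x μ1 s1 / gaussPDF x μ2 s2) atTop (nhds 0) := by
  have h1 : s1 ≠ 0 := hs1.ne'
  have h2 : s2 ≠ 0 := hs2.ne'
  set a : ℝ := 1/(2*s2) - 1/(2*s1) with ha
  set b : ℝ := μ1/s1 - μ2/s2 with hb
  set c : ℝ := μ2^2/(2*s2) - μ1^2/(2*s1) with hc
  have hE : Tendsto (fun x : ℝ => x*(a*x+b)+c) atTop atBot := by
    apply tendsto_atBot_add_const_right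
    rcases hlt with hlt | ⟨hse, hme⟩
    · have hanz : a < 0 := by
        rw [ha]
        have : 1/(2*s2) < 1/(2*s1) := by
          apply one_div_lt_one_div_of_lt <;> linarith
        linarith
      apply Tendsto.atTop_mul_atBot₀ tendsto_id
      exact tendsto_atBot_add_const_right _ b (tendsto_id.const_mul_atTop_of_neg hanz)
    · have haz : a = 0 := by rw [ha, hse]; ring
      have hbn : b < 0 := by
        rw [hb, hse]
        have h := (div_lt_div_iff_of_pos_right hs2).2 hme
        linarith
      have heqf : (fun x:ℝ => x*(a*x+b)) = fun x => b*x := by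
        funext x; rw [haz]; ring
      rw [heqf]
      exact tendsto_id.const_mul_atTop_of_neg hbn
  have key : (fun x => gaussPDF x μ1 s1 / gaussPDF x μ2 s2)
      = fun x => Real.sqrt (2*Real.pi*s2)/Real.sqrt (2*Real.pi*s1) * Real.exp (x*(a*x+b)+c) := by
    funext x
    have hEeq : x*(a*x+b)+c = (-(x - μ1) ^ 2 / (2 * s1)) - (-(x - μ2) ^ 2 / (2 * s2)) := by
      rw [ha, hb, hc]; field_simp; ring
    rw [hEeq, Real.exp_sub]
    unfold gaussPDF
    have hq1 : (0:ℝ) < Real.sqrt (2*Real.pi*s1) := Real.sqrt_pos.2 (by positivity)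
    have hq2 : (0:ℝ) < Real.sqrt (2*Real.pi*s2) := Real.sqrt_pos.2 (by positivity)
    field_simp
  rw [key]
  have := (Real.tendsto_exp_atBot.comp hE).const_mul
    (Real.sqrt (2*Real.pi*s2)/Real.sqrt (2*Real.pi*s1))
  simpa using this

lemma gauss_linear_indep (S : Finset (ℝ × ℝ)) (c : ℝ × ℝ → ℝ)
    (hs : ∀ p ∈ S, 0 < p.2)
    (h : ∀ x : ℝ, ∑ p ∈ S, c p * gaussPDF x p.1 p.2 = 0) :
    ∀ p ∈ S, c p = 0 := by
  classical
  induction S using Finset.strongInduction with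
  | _ S ih =>
    rcases S.eq_empty_or_nonempty with rfl | hne
    · simp
    obtain ⟨s0, hs0, hmax0⟩ := S.exists_max_image (fun p => p.2) hne
    set T := S.filter (fun p => p.2 = s0.2) with hT
    have hTne : T.Nonempty := ⟨s0, by simp [hT, hs0]⟩
    obtain ⟨p0, hp0T, hmax1⟩ := T.exists_max_image (fun p => p.1) hTne
    have hp0S : p0 ∈ S := (Finset.mem_filter.1 hp0T).1
    have hp02 : p0.2 = s0.2 := (Finset.mem_filter.1 hp0T).2
    have horder : ∀ q ∈ S, q ≠ p0 → q.2 < p0.2 ∨ (q.2 = p0.2 ∧ q.1 < p0.1) := by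
      intro q hq hqne
      rcases lt_or_eq_of_le (hmax0 q hq) with hlt | heq2
      · left; rwa [hp02]
      · right
        have hqT : q ∈ T := Finset.mem_filter.2 ⟨hq, heq2⟩
        refine ⟨heq2.trans hp02.symm, ?_⟩
        rcases lt_or_eq_of_le (hmax1 q hqT) with h | h
        · exact h
        · exact absurd (Prod.ext h (heq2.trans hp02.symm)) hqne
    -- limit argument: c p0 = 0
    have hzero : c p0 = 0 := by
      have hlim : Tendsto (fun x => ∑ q ∈ S, c q * (gaussPDF x q.1 q.2 / gaussPDF x p0.1 p0.2))
          atTop (nhds (∑ q ∈ S, c q * (if q = p0 then 1 else 0))) := by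
        apply tendsto_finset_sum
        intro q hq
        by_cases hqe : q = p0
        · subst hqe
          simp only [if_pos rfl]
          have : (fun x => c q * (gaussPDF x q.1 q.2 / gaussPDF x q.1 q.2)) = fun _ => c q * 1 := by
            funext x
            rw [div_self (gaussPDF_pos x q.1 q.2 (hs q hq)).ne']
          rw [this]
          exact tendsto_const_nhds
        · simp only [if_neg hqe]
          exact (gauss_ratio_tendsto q.1 q.2 p0.1 p0.2 (hs q hq) (hs p0 hp0S)
            (horder q hq hqe)).const_mul (c q)
      have heq0 : (fun x => ∑ q ∈ S, c q * (gaussPDF x q.1 q.2 / gaussPDF x p0.1 p0.2))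
          = fun _ => (0:ℝ) := by
        funext x
        have : ∑ q ∈ S, c q * (gaussPDF x q.1 q.2 / gaussPDF x p0.1 p0.2)
            = (∑ q ∈ S, c q * gaussPDF x q.1 q.2) / gaussPDF x p0.1 p0.2 := by
          rw [Finset.sum_div]
          exact Finset.sum_congr rfl fun q _ => by rw [mul_div_assoc]
        rw [this, h x, zero_div]
      rw [heq0] at hlim
      have := tendsto_nhds_unique hlim tendsto_const_nhds
      simp only [mul_ite, mul_one, mul_zero, Finset.sum_ite_eq' S p0 c, if_pos hp0S] at this
      exact this
    -- remove p0 and recurse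
    have hrest : ∀ x : ℝ, ∑ p ∈ S.erase p0, c p * gaussPDF x p.1 p.2 = 0 := by
      intro x
      have := h x
      rw [← Finset.sum_erase_add S _ hp0S, hzero, zero_mul, add_zero] at this
      exact this
    intro p hp
    by_cases hpe : p = p0
    · rwa [hpe]
    · exact ih (S.erase p0) (Finset.erase_ssubset hp0S)
        (fun q hq => hs q (Finset.mem_of_mem_erase hq)) hrest p
        (Finset.mem_erase.2 ⟨hpe, hp⟩)

/-- Uniqueness of representation of finite Gaussian mixtures (Yakowitz–Spragins):
two minimal mixture representations of the same density agree up to a bijection of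
components. -/
theorem gaussian_mixture_unique_representation {n m : ℕ}
    (μ σ2 w : Fin n → ℝ) (ν τ2 v : Fin m → ℝ)
    (hσ : ∀ i, 0 < σ2 i) (hτ : ∀ j, 0 < τ2 j)
    (hw : ∀ i, 0 < w i) (hv : ∀ j, 0 < v j)
    (hdist₁ : Function.Injective (fun i => (μ i, σ2 i)))
    (hdist₂ : Function.Injective (fun j => (ν j, τ2 j)))
    (heq : ∀ x : ℝ, ∑ i, w i * gaussPDF x (μ i) (σ2 i)
        = ∑ j, v j * gaussPDF x (ν j) (τ2 j)) :
    n = m ∧ ∃ π : Fin n ≃ Fin m,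
      ∀ i, μ i = ν (π i) ∧ σ2 i = τ2 (π i) ∧ w i = v (π i) := by
  classical
  set f : Fin n → ℝ × ℝ := fun i => (μ i, σ2 i) with hf
  set g : Fin m → ℝ × ℝ := fun j => (ν j, τ2 j) with hg
  set S : Finset (ℝ × ℝ) := Finset.univ.image f ∪ Finset.univ.image g with hS
  set c : ℝ × ℝ → ℝ := fun p =>
      (∑ i ∈ Finset.univ.filter (fun i => f i = p), w i)
    - (∑ j ∈ Finset.univ.filter (fun j => g j = p), v j) with hcdef
  have hmapf : ∀ i : Fin n, f i ∈ S := fun i =>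
    Finset.mem_union_left _ (Finset.mem_image_of_mem f (Finset.mem_univ i))
  have hmapg : ∀ j : Fin m, g j ∈ S := fun j =>
    Finset.mem_union_right _ (Finset.mem_image_of_mem g (Finset.mem_univ j))
  have hsum : ∀ x : ℝ, ∑ p ∈ S, c p * gaussPDF x p.1 p.2 = 0 := by
    intro x
    have h1 : ∑ p ∈ S, (∑ i ∈ Finset.univ.filter (fun i => f i = p), w i) * gaussPDF x p.1 p.2
        = ∑ i, w i * gaussPDF x (μ i) (σ2 i) := by
      rw [← Finset.sum_fiberwise_of_maps_to (fun i _ => hmapf i)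
        (fun i => w i * gaussPDF x (μ i) (σ2 i))]
      refine Finset.sum_congr rfl fun p _ => ?_
      rw [Finset.sum_mul]
      refine Finset.sum_congr rfl fun i hi => ?_
      have : f i = p := (Finset.mem_filter.1 hi).2
      rw [← this]
    have h2 : ∑ p ∈ S, (∑ j ∈ Finset.univ.filter (fun j => g j = p), v j) * gaussPDF x p.1 p.2
        = ∑ j, v j * gaussPDF x (ν j) (τ2 j) := by
      rw [← Finset.sum_fiberwise_of_maps_to (fun j _ => hmapg j)
        (fun j => v j * gaussPDF x (ν j) (τ2 j))]
      refine Finset.sum_congr rfl fun p _ => ?_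
      rw [Finset.sum_mul]
      refine Finset.sum_congr rfl fun j hj => ?_
      have : g j = p := (Finset.mem_filter.1 hj).2
      rw [← this]
    calc ∑ p ∈ S, c p * gaussPDF x p.1 p.2
        = ∑ p ∈ S, ((∑ i ∈ Finset.univ.filter (fun i => f i = p), w i) * gaussPDF x p.1 p.2
          - (∑ j ∈ Finset.univ.filter (fun j => g j = p), v j) * gaussPDF x p.1 p.2) := by
          refine Finset.sum_congr rfl fun p _ => ?_
          rw [hcdef, sub_mul]
      _ = 0 := by rw [Finset.sum_sub_distrib, h1, h2, heq x, sub_self]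
  have hpos : ∀ p ∈ S, 0 < p.2 := by
    intro p hp
    rcases Finset.mem_union.1 hp with hp | hp
    · obtain ⟨i, _, rfl⟩ := Finset.mem_image.1 hp
      exact hσ i
    · obtain ⟨j, _, rfl⟩ := Finset.mem_image.1 hp
      exact hτ j
  have hc0 : ∀ p ∈ S, c p = 0 := gauss_linear_indep S c hpos hsum
  have hfilf : ∀ i : Fin n, Finset.univ.filter (fun i' => f i' = f i) = {i} := by
    intro i
    ext i'
    simp only [Finset.mem_filter, Finset.mem_univ, true_and, Finset.mem_singleton]
    exact ⟨fun h => hdist₁ h, fun h => by rw [h]⟩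
  have hfilg : ∀ j : Fin m, Finset.univ.filter (fun j' => g j' = g j) = {j} := by
    intro j
    ext j'
    simp only [Finset.mem_filter, Finset.mem_univ, true_and, Finset.mem_singleton]
    exact ⟨fun h => hdist₂ h, fun h => by rw [h]⟩
  have key1 : ∀ i : Fin n, ∃! j : Fin m, g j = f i := by
    intro i
    have hci := hc0 (f i) (hmapf i)
    rw [hcdef] at hci
    simp only [hfilf i, Finset.sum_singleton] at hci
    have hsumv : ∑ j ∈ Finset.univ.filter (fun j => g j = f i), v j = w i := by linarith
    have hne : (Finset.univ.filter (fun j => g j = f i)).Nonempty := by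
      by_contra hemp
      rw [Finset.not_nonempty_iff_eq_empty] at hemp
      rw [hemp, Finset.sum_empty] at hsumv
      exact absurd hsumv.symm (hw i).ne'
    obtain ⟨j, hj⟩ := hne
    have hj' : g j = f i := (Finset.mem_filter.1 hj).2
    exact ⟨j, hj', fun j' hj'' => hdist₂ (hj''.trans hj'.symm)⟩
  have key2 : ∀ j : Fin m, ∃! i : Fin n, f i = g j := by
    intro j
    have hcj := hc0 (g j) (hmapg j)
    rw [hcdef] at hcj
    simp only [hfilg j, Finset.sum_singleton] at hcj
    have hsumw : ∑ i ∈ Finset.univ.filter (fun i => f i = g j), w i = v j := by linarith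
    have hne : (Finset.univ.filter (fun i => f i = g j)).Nonempty := by
      by_contra hemp
      rw [Finset.not_nonempty_iff_eq_empty] at hemp
      rw [hemp, Finset.sum_empty] at hsumw
      exact absurd hsumw.symm (hv j).ne'
    obtain ⟨i, hi⟩ := hne
    have hi' : f i = g j := (Finset.mem_filter.1 hi).2
    exact ⟨i, hi', fun i' hi'' => hdist₁ (hi''.trans hi'.symm)⟩
  set pf : Fin n → Fin m := fun i => Fintype.choose _ (key1 i) with hpf
  set pg : Fin m → Fin n := fun j => Fintype.choose _ (key2 j) with hpg
  have hpfspec : ∀ i, g (pf i) = f i := fun i => Fintype.choose_spec _ (key1 i)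
  have hpgspec : ∀ j, f (pg j) = g j := fun j => Fintype.choose_spec _ (key2 j)
  have hleft : ∀ i, pg (pf i) = i := fun i => hdist₁ ((hpgspec (pf i)).trans (hpfspec i))
  have hright : ∀ j, pf (pg j) = j := fun j => hdist₂ ((hpfspec (pg j)).trans (hpgspec j))
  let hequiv : Fin n ≃ Fin m := ⟨pf, pg, hleft, hright⟩
  refine ⟨by simpa using Fintype.card_congr hequiv, hequiv, ?_⟩
  intro i
  have hgi : g (hequiv i) = f i := hpfspec i
  have hμ : μ i = ν (hequiv i) ∧ σ2 i = τ2 (hequiv i) := by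
    have := hgi
    rw [hf, hg] at this
    exact ⟨(Prod.mk.injEq _ _ _ _ ▸ this).1.symm, (Prod.ext_iff.1 this).2.symm⟩
  refine ⟨hμ.1, hμ.2, ?_⟩
  -- w i = v (pf i)
  have hci := hc0 (f i) (hmapf i)
  rw [hcdef] at hci
  simp only [hfilf i, Finset.sum_singleton] at hci
  have hfilter : Finset.univ.filter (fun j => g j = f i) = {hequiv i} := by
    ext j
    simp only [Finset.mem_filter, Finset.mem_univ, true_and, Finset.mem_singleton]
    constructor
    · intro h; exact hdist₂ (h.trans hgi.symm)
    · intro h; rw [h]; exact hgi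
  rw [hfilter, Finset.sum_singleton] at hci
  linarith
end
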